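/- arXiv:2004.10708 — 6 statements merged into one kernel-verified Lean document; each statement's English description precedes it below -/
import Mathlib

section
/- Let X be a square matrix, Y a positive definite matrix, and L a linear operator (possibly rectangular). Then L X† L† (L Y L†)⁻¹ L X L† ≤ L X† Y⁻¹ X L†, where the inverse (L Y L†)⁻¹ is the generalized (Moore–Penrose) inverse taken on the range of L Y L†. Moreover, if L is invertible, equality holds. -/
open Matrix
open scoped ComplexOrder

/-- Functional calculus for Hermitian matrices: apply `f` to the eigenvalues. -/
noncomputable def matFun {d : Type*} [Fintype d] [DecidableEq d]
    (A : Matrix d d ℂ) (f : ℝ → ℝ) : Matrix d d ℂ :=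
  if hA : A.IsHermitian then
    (hA.eigenvectorUnitary : Matrix d d ℂ) *
      Matrix.diagonal (fun i => (f (hA.eigenvalues i) : ℂ)) *
      (star hA.eigenvectorUnitary : Matrix d d ℂ)
  else 0

/-- Generalized (Moore–Penrose) inverse of a Hermitian matrix, taken on its support. -/
noncomputable def ginv {d : Type*} [Fintype d] [DecidableEq d]
    (A : Matrix d d ℂ) : Matrix d d ℂ :=
  matFun A (fun x => x⁻¹)

/-!
With `G = ginv (L Y Lᴴ)` and `Z = Y⁻¹ X Lᴴ - Lᴴ G (L X Lᴴ)`, expanding `Zᴴ Y Z` shows that the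
gap `L Xᴴ Y⁻¹ X Lᴴ - (L Xᴴ Lᴴ) G (L X Lᴴ)` equals `Zᴴ Y Z`, which is positive semidefinite.
The expansion only uses that `G` is Hermitian with `G (L Y Lᴴ) G = G`; on the functional calculus
side this is the scalar identity `x⁻¹ x x⁻¹ = x⁻¹`, valid also at `x = 0` since `0⁻¹ = 0`.
For invertible `L`, `G = (L Y Lᴴ)⁻¹` and `Lᴴ (L Y Lᴴ)⁻¹ L = Y⁻¹`, which gives equality.
-/

namespace Matrix

variable {d : Type*} [Fintype d] [DecidableEq d]

theorem IsHermitian.ginv_eq_cfc {A : Matrix d d ℂ} (hA : A.IsHermitian) :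
    ginv A = cfc (fun x : ℝ => x⁻¹) A := by
  rw [hA.cfc_eq, IsHermitian.cfc, Unitary.conjStarAlgAut_apply, ginv, matFun, dif_pos hA]
  rfl

theorem conjTranspose_ginv (A : Matrix d d ℂ) : (ginv A)ᴴ = ginv A := by
  by_cases hA : A.IsHermitian
  · rw [hA.ginv_eq_cfc]
    exact cfc_predicate (p := IsSelfAdjoint) (fun x : ℝ => x⁻¹) A
  · rw [ginv, matFun, dif_neg hA, conjTranspose_zero]

theorem IsHermitian.ginv_mul_self_mul_ginv {A : Matrix d d ℂ} (hA : A.IsHermitian) :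
    ginv A * A * ginv A = ginv A := by
  have hA' : IsSelfAdjoint A := hA
  rw [hA.ginv_eq_cfc]
  nth_rw 2 [← cfc_id' ℝ A]
  have hcont (f : ℝ → ℝ) : ContinuousOn f (spectrum ℝ A) := A.finite_real_spectrum.continuousOn f
  rw [← cfc_mul _ _ _ (hcont _) (hcont _), ← cfc_mul _ _ _ (hcont _) (hcont _)]
  exact cfc_congr fun x _ => by
    rcases eq_or_ne x 0 with rfl | hx <;> simp [*]

theorem IsHermitian.ginv_eq_inv {A : Matrix d d ℂ} (hA : A.IsHermitian) (hAu : IsUnit A) :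
    ginv A = A⁻¹ := by
  have hA' : IsSelfAdjoint A := hA
  rw [hA.ginv_eq_cfc, nonsing_inv_eq_ringInverse]
  exact cfc_ringInverse_id A hAu

section Transformer

variable {m n R : Type*} [Fintype m] [Fintype n] [DecidableEq n] [CommRing R] [StarRing R]

theorem transformer_gap_eq_conjTranspose_mul_mul (X Y : Matrix n n R) (L : Matrix m n R)
    (G : Matrix m m R) (hYH : Y.IsHermitian) (hY : IsUnit Y.det) (hG : Gᴴ = G)
    (hGBG : G * (L * Y * Lᴴ) * G = G) :
    L * Xᴴ * Y⁻¹ * X * Lᴴ - L * Xᴴ * Lᴴ * G * (L * X * Lᴴ) =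
      (Y⁻¹ * X * Lᴴ - Lᴴ * G * (L * X * Lᴴ))ᴴ * Y * (Y⁻¹ * X * Lᴴ - Lᴴ * G * (L * X * Lᴴ)) := by
  have hGBG' : G * (L * (Y * (Lᴴ * (G * (L * (X * Lᴴ)))))) = G * (L * (X * Lᴴ)) := by
    simpa only [Matrix.mul_assoc] using congrArg (· * (L * X * Lᴴ)) hGBG
  simp only [conjTranspose_sub, conjTranspose_mul, conjTranspose_conjTranspose,
    conjTranspose_nonsing_inv, hYH.eq, hG, Matrix.sub_mul, Matrix.mul_sub, Matrix.mul_assoc,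
    nonsing_inv_mul_cancel_left _ _ hY, mul_nonsing_inv_cancel_left _ _ hY, hGBG']
  abel

theorem conjTranspose_mul_inv_mul_mul_conjTranspose_mul {Y L : Matrix n n R}
    (hL : IsUnit L.det) : Lᴴ * (L * Y * Lᴴ)⁻¹ * L = Y⁻¹ := by
  have hLH : IsUnit Lᴴ.det := by rw [det_conjTranspose]; exact hL.star
  simp only [Matrix.mul_inv_rev, Matrix.mul_assoc, mul_nonsing_inv_cancel_left _ _ hLH,
    nonsing_inv_mul _ hL, Matrix.mul_one]

end Transformer

end Matrix

/-- **Transformer inequality.** For square `X`, positive definite `Y`, and any `L`,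
`L Xᴴ Lᴴ (L Y Lᴴ)⁻¹ L X Lᴴ ≤ L Xᴴ Y⁻¹ X Lᴴ` in the Loewner order, where the inverse of
`L Y Lᴴ` is the generalized inverse on its range; if `L` is invertible, equality holds. -/
theorem transformer_inequality {n : ℕ}
    (X Y : Matrix (Fin n) (Fin n) ℂ) (hY : Y.PosDef) :
    (∀ {m : ℕ} (L : Matrix (Fin m) (Fin n) ℂ),
      (L * Xᴴ * Y⁻¹ * X * Lᴴ -
        (L * Xᴴ * Lᴴ) * ginv (L * Y * Lᴴ) * (L * X * Lᴴ)).PosSemidef) ∧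
    (∀ L : Matrix (Fin n) (Fin n) ℂ, IsUnit L →
      (L * Xᴴ * Lᴴ) * ginv (L * Y * Lᴴ) * (L * X * Lᴴ) = L * Xᴴ * Y⁻¹ * X * Lᴴ) := by
  have hYdet : IsUnit Y.det := (isUnit_iff_isUnit_det Y).mp hY.isUnit
  have hB {m : ℕ} (L : Matrix (Fin m) (Fin n) ℂ) : (L * Y * Lᴴ).IsHermitian :=
    (hY.posSemidef.mul_mul_conjTranspose_same L).isHermitian
  refine ⟨fun L => ?_, fun L hL => ?_⟩
  · rw [transformer_gap_eq_conjTranspose_mul_mul X Y L _ hY.isHermitian hYdet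
      (conjTranspose_ginv _) (hB L).ginv_mul_self_mul_ginv]
    exact hY.posSemidef.conjTranspose_mul_mul_same _
  · have hLdet : IsUnit L.det := (isUnit_iff_isUnit_det L).mp hL
    have hBdet : IsUnit (L * Y * Lᴴ).det := by
      simp only [det_mul, det_conjTranspose]
      exact (hLdet.mul hYdet).mul hLdet.star
    rw [(hB L).ginv_eq_inv ((isUnit_iff_isUnit_det _).mpr hBdet)]
    calc L * Xᴴ * Lᴴ * (L * Y * Lᴴ)⁻¹ * (L * X * Lᴴ)
        = L * Xᴴ * (Lᴴ * (L * Y * Lᴴ)⁻¹ * L) * X * Lᴴ := by simp only [Matrix.mul_assoc]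
      _ = L * Xᴴ * Y⁻¹ * X * Lᴴ := by
        rw [conjTranspose_mul_inv_mul_mul_conjTranspose_mul hLdet]
end

section
/- For positive definite matrices ρ and σ of the same dimension and any α ∈ (0,1) ∪ (1,∞), the following three expressions are equal: Tr[σ (σ^{−1/2} ρ σ^{−1/2})^α] = Tr[ρ (ρ^{−1/2} σ ρ^{−1/2})^{1−α}] = Tr[ρ (ρ^{1/2} σ^{−1} ρ^{1/2})^{α−1}]. -/
/-!
Put `X = σ^{-1/2} ρ^{1/2}`. Then `X Xᴴ = σ^{-1/2} ρ σ^{-1/2}`, `Xᴴ X = ρ^{1/2} σ⁻¹ ρ^{1/2}` and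
`Xᴴ σ X = ρ`. Since `X` intertwines `Xᴴ X` and `X Xᴴ`, it intertwines `f(Xᴴ X)` and `f(X Xᴴ)` for
every `f` (on the finite spectrum `f` is a polynomial), so by cyclicity of the trace
`Tr[σ (X Xᴴ)^α] = Tr[Xᴴ σ X (Xᴴ X)^{α-1}] = Tr[ρ (ρ^{1/2} σ⁻¹ ρ^{1/2})^{α-1}]`.
The middle expression is the same one, because `ρ^{-1/2} σ ρ^{-1/2} = (Xᴴ X)⁻¹`.
-/

open Matrix
open scoped ComplexOrder

/-- Real matrix power of a Hermitian matrix via the functional calculus. -/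
noncomputable def mrpow {d : Type*} [Fintype d] [DecidableEq d]
    (A : Matrix d d ℂ) (r : ℝ) : Matrix d d ℂ :=
  matFun A (fun x => x ^ r)


open Polynomial in
theorem SemiconjBy.aeval {R A : Type*} [CommSemiring R] [Semiring A] [Algebra R A] {x a b : A}
    (h : SemiconjBy x a b) (p : R[X]) : SemiconjBy x (aeval a p) (aeval b p) := by
  induction p using Polynomial.induction_on' with
  | add p q hp hq => simpa only [map_add] using hp.add_right hq
  | monomial n c =>
    simp only [aeval_monomial]
    exact SemiconjBy.mul_right (Algebra.commute_algebraMap_right c x) (h.pow_right n)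

theorem SemiconjBy.cfc_of_finite_spectrum {A : Type*} [Ring A] [StarRing A] [Algebra ℝ A]
    [TopologicalSpace A] [ContinuousFunctionalCalculus ℝ A IsSelfAdjoint] {x a b : A}
    (h : SemiconjBy x a b) (ha : IsSelfAdjoint a) (hb : IsSelfAdjoint b)
    (ha' : (spectrum ℝ a).Finite) (hb' : (spectrum ℝ b).Finite) (f : ℝ → ℝ) :
    SemiconjBy x (cfc f a) (cfc f b) := by
  classical
  set p := Lagrange.interpolate (ha'.union hb').toFinset id f
  have hp : ∀ y ∈ spectrum ℝ a ∪ spectrum ℝ b, p.eval y = f y := fun y hy =>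
    Lagrange.eval_interpolate_at_node f (Set.injOn_id _) ((ha'.union hb').mem_toFinset.mpr hy)
  rw [cfc_congr fun y hy => (hp y (Or.inl hy)).symm, cfc_congr fun y hy => (hp y (Or.inr hy)).symm,
    cfc_polynomial p a, cfc_polynomial p b]
  exact SemiconjBy.aeval h p

section mrpow

variable {d : Type*} [Fintype d] [DecidableEq d]

lemma Matrix.PosDef.pos_of_mem_spectrum {A : Matrix d d ℂ} (hA : A.PosDef) {x : ℝ}
    (hx : x ∈ spectrum ℝ A) : 0 < x := by
  obtain ⟨i, rfl⟩ := hA.1.spectrum_real_eq_range_eigenvalues ▸ hx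
  exact hA.eigenvalues_pos i

lemma mrpow_eq_cfc {A : Matrix d d ℂ} (hA : A.IsHermitian) (r : ℝ) :
    mrpow A r = cfc (fun x : ℝ => x ^ r) A := by
  rw [mrpow, matFun, dif_pos hA, hA.cfc_eq, Matrix.IsHermitian.cfc]
  rfl

lemma isHermitian_mrpow {A : Matrix d d ℂ} (hA : A.IsHermitian) (r : ℝ) :
    (mrpow A r).IsHermitian := by
  rw [mrpow_eq_cfc hA]
  exact cfc_predicate _ A

lemma mrpow_one {A : Matrix d d ℂ} (hA : A.IsHermitian) : mrpow A 1 = A := by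
  simp only [mrpow_eq_cfc hA, Real.rpow_one]
  exact cfc_id' ℝ A hA.isSelfAdjoint

lemma mrpow_zero {A : Matrix d d ℂ} (hA : A.IsHermitian) : mrpow A 0 = 1 := by
  simp only [mrpow_eq_cfc hA, Real.rpow_zero]
  exact cfc_const_one ℝ A hA.isSelfAdjoint

variable {A : Matrix d d ℂ} (hA : A.PosDef)
include hA

lemma mrpow_add (r s : ℝ) : mrpow A (r + s) = mrpow A r * mrpow A s := by
  rw [mrpow_eq_cfc hA.1, mrpow_eq_cfc hA.1, mrpow_eq_cfc hA.1,
    ← cfc_mul _ _ A (A.finite_real_spectrum.continuousOn _) (A.finite_real_spectrum.continuousOn _)]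
  exact cfc_congr fun x hx => Real.rpow_add (hA.pos_of_mem_spectrum hx) r s

lemma mrpow_mul_mrpow_neg (r : ℝ) : mrpow A r * mrpow A (-r) = 1 := by
  rw [← mrpow_add hA, add_neg_cancel, mrpow_zero hA.1]

lemma isUnit_mrpow (r : ℝ) : IsUnit (mrpow A r) :=
  IsUnit.of_mul_eq_one _ (mrpow_mul_mrpow_neg hA r)

lemma inv_mrpow (r : ℝ) : (mrpow A r)⁻¹ = mrpow A (-r) :=
  Matrix.inv_eq_right_inv (mrpow_mul_mrpow_neg hA r)

lemma mrpow_neg_one : mrpow A (-1) = A⁻¹ := by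
  rw [← inv_mrpow hA, mrpow_one hA.1]

lemma mrpow_mrpow (r s : ℝ) : mrpow (mrpow A r) s = mrpow A (r * s) := by
  rw [mrpow_eq_cfc (isHermitian_mrpow hA.1 r), mrpow_eq_cfc hA.1 r, mrpow_eq_cfc hA.1 (r * s),
    ← cfc_comp (fun x : ℝ => x ^ s) (fun x : ℝ => x ^ r) A hA.1.isSelfAdjoint
      ((A.finite_real_spectrum.image _).continuousOn _) (A.finite_real_spectrum.continuousOn _)]
  exact cfc_congr fun x hx => (Real.rpow_mul (hA.pos_of_mem_spectrum hx).le r s).symm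

lemma mrpow_nonsing_inv (r : ℝ) : mrpow A⁻¹ r = mrpow A (-r) := by
  rw [← mrpow_neg_one hA, mrpow_mrpow hA, neg_one_mul]

lemma mrpow_half_mul_self : mrpow A (1 / 2) * mrpow A (1 / 2) = A := by
  rw [← mrpow_add hA, add_halves, mrpow_one hA.1]

lemma mrpow_neg_half_mul_self : mrpow A (-(1 / 2)) * mrpow A (-(1 / 2)) = A⁻¹ := by
  rw [← mrpow_add hA, ← mrpow_neg_one hA]
  norm_num

lemma mrpow_neg_half_mul_self_mul_mrpow_neg_half :
    mrpow A (-(1 / 2)) * A * mrpow A (-(1 / 2)) = 1 := by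
  nth_rewrite 2 [← mrpow_one hA.1]
  rw [← mrpow_add hA, ← mrpow_add hA, ← mrpow_zero hA.1]
  norm_num

end mrpow

section conjTranspose

variable {d : Type*} [Fintype d] [DecidableEq d]

lemma mrpow_mul_conjTranspose_self_mul (X : Matrix d d ℂ) (r : ℝ) :
    mrpow (X * Xᴴ) r * X = X * mrpow (Xᴴ * X) r := by
  rw [mrpow_eq_cfc (isHermitian_mul_conjTranspose_self X),
    mrpow_eq_cfc (isHermitian_conjTranspose_mul_self X)]
  refine (SemiconjBy.cfc_of_finite_spectrum ?_ (isHermitian_conjTranspose_mul_self X).isSelfAdjoint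
    (isHermitian_mul_conjTranspose_self X).isSelfAdjoint finite_real_spectrum finite_real_spectrum
    _).symm
  exact (Matrix.mul_assoc X Xᴴ X).symm

lemma trace_mul_mrpow_mul_conjTranspose_self {X : Matrix d d ℂ} (hX : IsUnit X)
    (S : Matrix d d ℂ) (r : ℝ) :
    (S * mrpow (X * Xᴴ) r).trace = (Xᴴ * S * X * mrpow (Xᴴ * X) (r - 1)).trace := by
  have hpos : (X * Xᴴ).PosDef := .mul_conjTranspose_self X (vecMul_injective_iff_isUnit.mpr hX)
  calc (S * mrpow (X * Xᴴ) r).trace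
      = (S * (mrpow (X * Xᴴ) (r - 1) * X) * Xᴴ).trace := by
        rw [← sub_add_cancel r 1, mrpow_add hpos, mrpow_one hpos.1, add_sub_cancel_right]
        simp only [Matrix.mul_assoc]
    _ = (Xᴴ * S * X * mrpow (Xᴴ * X) (r - 1)).trace := by
        rw [trace_mul_comm, mrpow_mul_conjTranspose_self_mul]
        simp only [Matrix.mul_assoc]

end conjTranspose

theorem geomRenyiQuasiEntropy_alt_expressions_general {n : ℕ}
    (ρ σ : Matrix (Fin n) (Fin n) ℂ) (hρ : ρ.PosDef) (hσ : σ.PosDef)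
    (α : ℝ) :
    (σ * mrpow (mrpow σ (-(1 / 2)) * ρ * mrpow σ (-(1 / 2))) α).trace =
      (ρ * mrpow (mrpow ρ (-(1 / 2)) * σ * mrpow ρ (-(1 / 2))) (1 - α)).trace ∧
    (σ * mrpow (mrpow σ (-(1 / 2)) * ρ * mrpow σ (-(1 / 2))) α).trace =
      (ρ * mrpow (mrpow ρ (1 / 2) * σ⁻¹ * mrpow ρ (1 / 2)) (α - 1)).trace := by
  set X := mrpow σ (-(1 / 2)) * mrpow ρ (1 / 2)
  have hX : IsUnit X := (isUnit_mrpow hσ _).mul (isUnit_mrpow hρ _)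
  have hXh : Xᴴ = mrpow ρ (1 / 2) * mrpow σ (-(1 / 2)) := by
    rw [conjTranspose_mul, (isHermitian_mrpow hρ.1 _).eq, (isHermitian_mrpow hσ.1 _).eq]
  have hXXh : X * Xᴴ = mrpow σ (-(1 / 2)) * ρ * mrpow σ (-(1 / 2)) := by
    rw [← mrpow_half_mul_self hρ]
    simp only [X, hXh, Matrix.mul_assoc]
  have hXhX : Xᴴ * X = mrpow ρ (1 / 2) * σ⁻¹ * mrpow ρ (1 / 2) := by
    rw [← mrpow_neg_half_mul_self hσ]
    simp only [X, hXh, Matrix.mul_assoc]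
  have hXhσX : Xᴴ * σ * X = ρ := by
    calc Xᴴ * σ * X
        = mrpow ρ (1 / 2) * (mrpow σ (-(1 / 2)) * σ * mrpow σ (-(1 / 2))) * mrpow ρ (1 / 2) := by
          simp only [X, hXh, Matrix.mul_assoc]
      _ = ρ := by
          rw [mrpow_neg_half_mul_self_mul_mrpow_neg_half hσ, Matrix.mul_one, mrpow_half_mul_self hρ]
  have hXhX_inv : mrpow ρ (-(1 / 2)) * σ * mrpow ρ (-(1 / 2)) = (Xᴴ * X)⁻¹ := by
    rw [hXhX, Matrix.mul_inv_rev, Matrix.mul_inv_rev, inv_mrpow hρ,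
      Matrix.nonsing_inv_nonsing_inv _ ((isUnit_iff_isUnit_det σ).mp hσ.isUnit), Matrix.mul_assoc]
  have htrace := trace_mul_mrpow_mul_conjTranspose_self hX σ α
  rw [hXXh, hXhσX] at htrace
  refine ⟨htrace.trans ?_, hXhX ▸ htrace⟩
  rw [hXhX_inv, mrpow_nonsing_inv (.conjTranspose_mul_self X (mulVec_injective_iff_isUnit.mpr hX)),
    neg_sub]

/-- **Alternative expressions for the geometric Rényi relative quasi-entropy.** For positive
definite `ρ, σ` and `α ∈ (0,1) ∪ (1,∞)`:
`Tr[σ (σ^{-1/2} ρ σ^{-1/2})^α] = Tr[ρ (ρ^{-1/2} σ ρ^{-1/2})^{1-α}] = Tr[ρ (ρ^{1/2} σ⁻¹ ρ^{1/2})^{α-1}]`. -/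
theorem geomRenyiQuasiEntropy_alt_expressions {n : ℕ}
    (ρ σ : Matrix (Fin n) (Fin n) ℂ) (hρ : ρ.PosDef) (hσ : σ.PosDef)
    (α : ℝ) (hα : α ∈ Set.Ioo (0 : ℝ) 1 ∪ Set.Ioi 1) :
    (σ * mrpow (mrpow σ (-(1 / 2)) * ρ * mrpow σ (-(1 / 2))) α).trace =
      (ρ * mrpow (mrpow ρ (-(1 / 2)) * σ * mrpow ρ (-(1 / 2))) (1 - α)).trace ∧
    (σ * mrpow (mrpow σ (-(1 / 2)) * ρ * mrpow σ (-(1 / 2))) α).trace =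
      (ρ * mrpow (mrpow ρ (1 / 2) * σ⁻¹ * mrpow ρ (1 / 2)) (α - 1)).trace :=
  geomRenyiQuasiEntropy_alt_expressions_general ρ σ hρ hσ α
end

section
/- For positive definite matrices ρ₁, σ₁ on one space and ρ₂, σ₂ on another, and any α > 0, the geometric Rényi relative quasi-entropy is multiplicative under tensor products: Tr[(σ₁ ⊗ σ₂) (((σ₁ ⊗ σ₂)^{−1/2} (ρ₁ ⊗ ρ₂) (σ₁ ⊗ σ₂)^{−1/2})^α] = Tr[σ₁ (σ₁^{−1/2} ρ₁ σ₁^{−1/2})^α] · Tr[σ₂ (σ₂^{−1/2} ρ₂ σ₂^{−1/2})^α]. -/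
open Matrix
open scoped ComplexOrder Kronecker

/-- The geometric Rényi relative quasi-entropy `Q̂_α(ρ‖σ) = Tr[σ (σ^{-1/2} ρ σ^{-1/2})^α]`. -/
noncomputable def geomQuasiEntropy {d : Type*} [Fintype d] [DecidableEq d]
    (α : ℝ) (ρ σ : Matrix d d ℂ) : ℂ :=
  (σ * mrpow (mrpow σ (-(1 / 2)) * ρ * mrpow σ (-(1 / 2))) α).trace

/-!
The functional calculus of a Hermitian matrix can be computed from *any* unitary
diagonalization `A = U diag(c) U*`: both that expression and `matFun A f` equal `p(A)` for a
polynomial `p` interpolating `f` on the eigenvalues of `A` and on the entries of `c`. If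
`Aᵢ = Uᵢ diag(cᵢ) Uᵢ*`, then `A₁ ⊗ A₂ = (U₁ ⊗ U₂) diag(c₁ c₂) (U₁ ⊗ U₂)*`, so for a function
multiplicative on `[0, ∞)`, such as `x ↦ x ^ r`, the functional calculus of a Kronecker product
of positive semidefinite matrices factors. Applied to `σ^{-1/2}` and to
`σ^{-1/2} ρ σ^{-1/2}`, the whole expression inside the trace factors, and the trace of a
Kronecker product is the product of the traces.
-/

open Polynomial

theorem Unitary.aeval_conj {R A : Type*} [CommSemiring R] [Semiring A] [StarMul A] [Algebra R A]
    (u : unitary A) (a : A) (p : R[X]) :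
    aeval ((u : A) * a * star (u : A)) p = u * aeval a p * star (u : A) :=
  DFunLike.congr_fun (aeval_algEquiv (Unitary.conjStarAlgAut R A u).toAlgEquiv a) p

namespace Matrix

theorem aeval_diagonal {d R A : Type*} [Fintype d] [DecidableEq d] [CommSemiring R]
    [CommSemiring A] [Algebra R A] (v : d → A) (p : R[X]) :
    aeval (diagonal v) p = diagonal fun i => aeval (v i) p := by
  rw [← diagonalAlgHom_apply (R := R), aeval_algHom_apply, aeval_pi_apply, diagonalAlgHom_apply]

section Kronecker

variable {R d₁ d₂ : Type*} [CommRing R] [StarRing R] [Fintype d₁] [Fintype d₂]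
  [DecidableEq d₁] [DecidableEq d₂]

theorem kronecker_mem_unitaryGroup {U₁ : Matrix d₁ d₁ R} {U₂ : Matrix d₂ d₂ R}
    (h₁ : U₁ ∈ unitaryGroup d₁ R) (h₂ : U₂ ∈ unitaryGroup d₂ R) :
    U₁ ⊗ₖ U₂ ∈ unitaryGroup (d₁ × d₂) R := by
  rw [mem_unitaryGroup_iff, star_eq_conjTranspose, conjTranspose_kronecker, ← mul_kronecker_mul,
    ← star_eq_conjTranspose, ← star_eq_conjTranspose, mem_unitaryGroup_iff.mp h₁,
    mem_unitaryGroup_iff.mp h₂, one_kronecker_one]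

theorem mul_diagonal_mul_star_kronecker (U₁ : Matrix d₁ d₁ R) (U₂ : Matrix d₂ d₂ R)
    (c₁ : d₁ → R) (c₂ : d₂ → R) :
    (U₁ * diagonal c₁ * star U₁) ⊗ₖ (U₂ * diagonal c₂ * star U₂) =
      (U₁ ⊗ₖ U₂) * diagonal (fun i => c₁ i.1 * c₂ i.2) * star (U₁ ⊗ₖ U₂) := by
  rw [mul_kronecker_mul, mul_kronecker_mul, diagonal_kronecker_diagonal, star_eq_conjTranspose,
    star_eq_conjTranspose, star_eq_conjTranspose, conjTranspose_kronecker]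

end Kronecker

variable {d : Type*} [Fintype d] [DecidableEq d]

theorem isHermitian_mul_diagonal_mul_star (U : Matrix d d ℂ) (c : d → ℝ) :
    (U * diagonal (fun i => (c i : ℂ)) * star U).IsHermitian :=
  isHermitian_mul_mul_conjTranspose U
    (isHermitian_diagonal_of_self_adjoint _ (funext fun i => Complex.conj_ofReal (c i)))

theorem aeval_mul_diagonal_mul_star {U : Matrix d d ℂ} (hU : U ∈ unitaryGroup d ℂ)
    (c : d → ℝ) (p : ℝ[X]) :
    aeval (U * diagonal (fun i => (c i : ℂ)) * star U) p =
      U * diagonal (fun i => ((p.eval (c i) : ℝ) : ℂ)) * star U := by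
  have hc : ∀ i, aeval (c i : ℂ) p = p.eval (c i) := fun i => aeval_ofReal p (c i)
  rw [Unitary.aeval_conj ⟨U, hU⟩, aeval_diagonal]
  simp only [hc]

theorem PosSemidef.exists_unitary_diagonalization {A : Matrix d d ℂ} (hA : A.PosSemidef) :
    ∃ U ∈ unitaryGroup d ℂ, ∃ c : d → ℝ, (∀ i, 0 ≤ c i) ∧
      A = U * diagonal (fun i => (c i : ℂ)) * star U :=
  ⟨_, hA.1.eigenvectorUnitary.2, _, hA.eigenvalues_nonneg, hA.1.spectral_theorem⟩

end Matrix

section FunctionalCalculus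

variable {d : Type*} [Fintype d] [DecidableEq d]

theorem isHermitian_matFun (A : Matrix d d ℂ) (f : ℝ → ℝ) : (matFun A f).IsHermitian := by
  unfold matFun
  split_ifs
  · exact isHermitian_mul_diagonal_mul_star _ _
  · exact isHermitian_zero

theorem Matrix.PosSemidef.mrpow_mul_mul_mrpow {ρ : Matrix d d ℂ} (hρ : ρ.PosSemidef)
    (σ : Matrix d d ℂ) (r : ℝ) : (mrpow σ r * ρ * mrpow σ r).PosSemidef := by
  simpa only [mrpow, (isHermitian_matFun σ _).eq] using hρ.mul_mul_conjTranspose_same (mrpow σ r)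

theorem matFun_eq_aeval {A : Matrix d d ℂ} (hA : A.IsHermitian) {f : ℝ → ℝ} {p : ℝ[X]}
    (hp : ∀ i, p.eval (hA.eigenvalues i) = f (hA.eigenvalues i)) :
    matFun A f = aeval A p := by
  have hA' : A = hA.eigenvectorUnitary * diagonal (fun i => (hA.eigenvalues i : ℂ)) *
      star (hA.eigenvectorUnitary : Matrix d d ℂ) := hA.spectral_theorem
  rw [matFun, dif_pos hA]
  conv_rhs => rw [hA']
  rw [aeval_mul_diagonal_mul_star hA.eigenvectorUnitary.2]
  simp only [hp]

theorem matFun_mul_diagonal_mul_star {U : Matrix d d ℂ} (hU : U ∈ unitaryGroup d ℂ)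
    (c : d → ℝ) (f : ℝ → ℝ) :
    matFun (U * diagonal (fun i => (c i : ℂ)) * star U) f =
      U * diagonal (fun i => (f (c i) : ℂ)) * star U := by
  set A := U * diagonal (fun i => (c i : ℂ)) * star U
  have hA : A.IsHermitian := isHermitian_mul_diagonal_mul_star U c
  let S := Finset.univ.image hA.eigenvalues ∪ Finset.univ.image c
  let p := Lagrange.interpolate S id f
  have hp : ∀ x ∈ S, p.eval x = f x := fun x hx =>
    Lagrange.eval_interpolate_at_node f (Set.injOn_id _) hx
  rw [matFun_eq_aeval hA fun i => hp _ (by simp [S]), aeval_mul_diagonal_mul_star hU]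
  simp only [hp _ (by simp [S] : c _ ∈ S)]

end FunctionalCalculus

section Kronecker

variable {d₁ d₂ : Type*} [Fintype d₁] [Fintype d₂] [DecidableEq d₁] [DecidableEq d₂]
  {A : Matrix d₁ d₁ ℂ} {B : Matrix d₂ d₂ ℂ}

theorem matFun_kronecker (hA : A.PosSemidef) (hB : B.PosSemidef) {f : ℝ → ℝ}
    (hf : ∀ x y, 0 ≤ x → 0 ≤ y → f (x * y) = f x * f y) :
    matFun (A ⊗ₖ B) f = matFun A f ⊗ₖ matFun B f := by
  obtain ⟨U₁, hU₁, c₁, hc₁, rfl⟩ := hA.exists_unitary_diagonalization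
  obtain ⟨U₂, hU₂, c₂, hc₂, rfl⟩ := hB.exists_unitary_diagonalization
  have hprod : (fun i : d₁ × d₂ => (c₁ i.1 : ℂ) * c₂ i.2) =
      fun i => ((c₁ i.1 * c₂ i.2 : ℝ) : ℂ) := by
    push_cast; rfl
  rw [mul_diagonal_mul_star_kronecker, hprod,
    matFun_mul_diagonal_mul_star (kronecker_mem_unitaryGroup hU₁ hU₂),
    matFun_mul_diagonal_mul_star hU₁, matFun_mul_diagonal_mul_star hU₂,
    mul_diagonal_mul_star_kronecker]
  simp only [hf _ _ (hc₁ _) (hc₂ _), Complex.ofReal_mul]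

theorem mrpow_kronecker (hA : A.PosSemidef) (hB : B.PosSemidef) (r : ℝ) :
    mrpow (A ⊗ₖ B) r = mrpow A r ⊗ₖ mrpow B r :=
  matFun_kronecker hA hB fun _ _ hx hy => Real.mul_rpow hx hy

end Kronecker

theorem geomQuasiEntropy_kronecker_general {n m : ℕ}
    (ρ₁ σ₁ : Matrix (Fin n) (Fin n) ℂ) (ρ₂ σ₂ : Matrix (Fin m) (Fin m) ℂ)
    (hρ₁ : ρ₁.PosDef) (hσ₁ : σ₁.PosDef) (hρ₂ : ρ₂.PosDef) (hσ₂ : σ₂.PosDef)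
    (α : ℝ) :
    geomQuasiEntropy α (ρ₁ ⊗ₖ ρ₂) (σ₁ ⊗ₖ σ₂) =
      geomQuasiEntropy α ρ₁ σ₁ * geomQuasiEntropy α ρ₂ σ₂ := by
  unfold geomQuasiEntropy
  rw [mrpow_kronecker hσ₁.posSemidef hσ₂.posSemidef, ← mul_kronecker_mul, ← mul_kronecker_mul,
    mrpow_kronecker (hρ₁.posSemidef.mrpow_mul_mul_mrpow σ₁ _)
      (hρ₂.posSemidef.mrpow_mul_mul_mrpow σ₂ _),
    ← mul_kronecker_mul, trace_kronecker]

/-- **Multiplicativity of the geometric Rényi relative quasi-entropy under tensor products:**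
`Q̂_α(ρ₁ ⊗ ρ₂ ‖ σ₁ ⊗ σ₂) = Q̂_α(ρ₁‖σ₁) · Q̂_α(ρ₂‖σ₂)` for positive definite inputs and `α > 0`. -/
theorem geomQuasiEntropy_kronecker {n m : ℕ}
    (ρ₁ σ₁ : Matrix (Fin n) (Fin n) ℂ) (ρ₂ σ₂ : Matrix (Fin m) (Fin m) ℂ)
    (hρ₁ : ρ₁.PosDef) (hσ₁ : σ₁.PosDef) (hρ₂ : ρ₂.PosDef) (hσ₂ : σ₂.PosDef)
    (α : ℝ) (hα : 0 < α) :
    geomQuasiEntropy α (ρ₁ ⊗ₖ ρ₂) (σ₁ ⊗ₖ σ₂) =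
      geomQuasiEntropy α ρ₁ σ₁ * geomQuasiEntropy α ρ₂ σ₂ :=
  geomQuasiEntropy_kronecker_general ρ₁ σ₁ ρ₂ σ₂ hρ₁ hσ₁ hρ₂ hσ₂ α
end

section
/- Let ρ be a density matrix (positive semidefinite with trace 1) and σ a positive definite matrix with Tr[σ] ≤ 1, and let α ∈ (0,1) ∪ (1,2]. If the geometric Rényi relative entropy D̂_α(ρ‖σ) = (α−1)⁻¹ ln Tr[σ (σ^{−1/2} ρ σ^{−1/2})^α] equals zero, and ρ is positive definite, then ρ = σ. -/
open Matrix
open scoped ComplexOrder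

/-!
Let `X = σ^{-1/2} ρ σ^{-1/2}` have eigenvalues `μᵢ` and orthonormal eigenvectors `vᵢ`, and put
`wᵢ = ⟨vᵢ, σ vᵢ⟩ > 0`. Then `∑ wᵢ = Tr σ ≤ 1`, `∑ wᵢ μᵢ = Tr[σ X] = Tr ρ = 1`, and vanishing of
the entropy means `∑ wᵢ μᵢ^α = 1`. Bernoulli's inequality `μ^α ≤ 1 + α (μ - 1)` (reversed for
`α > 1`, strict unless `μ = 1`) summed against `w` gives
`(1 - α) ∑ wᵢ (1 + α (μᵢ - 1) - μᵢ^α) = (1 - α)² (∑ wᵢ - 1) ≤ 0` with every summand `≥ 0`,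
so all `μᵢ = 1`, `X = 1` and `ρ = σ`.
-/

lemma one_sub_mul_bernoulli_gap_pos {α x : ℝ} (hα : 0 < α) (hα1 : α ≠ 1) (hx : 0 ≤ x)
    (hx1 : x ≠ 1) : 0 < (1 - α) * (1 + α * (x - 1) - x ^ α) := by
  have hs : -1 ≤ x - 1 := by linarith
  have hs0 : x - 1 ≠ 0 := sub_ne_zero.mpr hx1
  have hx' : 1 + (x - 1) = x := by ring
  rcases hα1.lt_or_gt with h | h
  · have hbern := rpow_one_add_lt_one_add_mul_self hs hs0 hα h
    rw [hx'] at hbern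
    exact mul_pos (by linarith) (by linarith)
  · have hbern := one_add_mul_self_lt_rpow_one_add hs hs0 h
    rw [hx'] at hbern
    exact mul_pos_of_neg_of_neg (by linarith) (by linarith)

theorem eq_one_of_sum_mul_rpow_eq_one {ι : Type*} [Fintype ι] {w μ : ι → ℝ} {α : ℝ}
    (hα : 0 < α) (hα1 : α ≠ 1) (hw : ∀ i, 0 < w i) (hμ : ∀ i, 0 ≤ μ i) (hw1 : ∑ i, w i ≤ 1)
    (hsum : ∑ i, w i * μ i = 1) (hsum_rpow : ∑ i, w i * μ i ^ α = 1) (i : ι) : μ i = 1 := by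
  set gap := fun j => w j * ((1 - α) * (1 + α * (μ j - 1) - μ j ^ α))
  have hgap_nonneg : ∀ j ∈ Finset.univ, 0 ≤ gap j := fun j _ => by
    refine mul_nonneg (hw j).le ?_
    rcases eq_or_ne (μ j) 1 with h | h
    · simp [h]
    · exact (one_sub_mul_bernoulli_gap_pos hα hα1 (hμ j) h).le
  have hgap_sum : ∑ j, gap j = (1 - α) ^ 2 * (∑ j, w j - 1) := by
    have hterm : ∀ j, gap j =
        (1 - α) ^ 2 * w j + α * (1 - α) * (w j * μ j) - (1 - α) * (w j * μ j ^ α) :=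
      fun j => by ring
    simp only [hterm, Finset.sum_sub_distrib, Finset.sum_add_distrib, ← Finset.mul_sum, hsum,
      hsum_rpow]
    ring
  have hgap_zero : ∑ j, gap j = 0 :=
    le_antisymm (hgap_sum ▸ mul_nonpos_of_nonneg_of_nonpos (sq_nonneg _) (by linarith))
      (Finset.sum_nonneg hgap_nonneg)
  by_contra hi
  have hgap_i := (Finset.sum_eq_zero_iff_of_nonneg hgap_nonneg).mp hgap_zero i (Finset.mem_univ i)
  exact (mul_pos (hw i) (one_sub_mul_bernoulli_gap_pos hα hα1 (hμ i) hi)).ne' hgap_i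

namespace Matrix

variable {d : Type*} [Fintype d] [DecidableEq d] {A : Matrix d d ℂ}

lemma IsHermitian.matFun_eq_cfc (hA : A.IsHermitian) (f : ℝ → ℝ) : matFun A f = cfc f A := by
  rw [hA.cfc_eq, IsHermitian.cfc, Unitary.conjStarAlgAut_apply, matFun, dif_pos hA]
  rfl

lemma IsHermitian.matFun_const_one (hA : A.IsHermitian) : matFun A (fun _ => 1) = 1 := by
  rw [hA.matFun_eq_cfc]
  exact cfc_const_one ℝ A

lemma IsHermitian.matFun_id (hA : A.IsHermitian) : matFun A (fun x => x) = A := by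
  rw [hA.matFun_eq_cfc]
  exact cfc_id' ℝ A

lemma IsHermitian.mrpow_zero (hA : A.IsHermitian) : mrpow A 0 = 1 := by
  simp only [mrpow, Real.rpow_zero, hA.matFun_const_one]

lemma IsHermitian.mrpow_one (hA : A.IsHermitian) : mrpow A 1 = A := by
  simp only [mrpow, Real.rpow_one, hA.matFun_id]

lemma IsHermitian.isHermitian_mrpow (hA : A.IsHermitian) (r : ℝ) : (mrpow A r).IsHermitian := by
  rw [mrpow, hA.matFun_eq_cfc]
  exact cfc_predicate _ A

lemma PosDef.mrpow_mul_mrpow (hA : A.PosDef) (r s : ℝ) :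
    mrpow A r * mrpow A s = mrpow A (r + s) := by
  simp only [mrpow, hA.1.matFun_eq_cfc]
  rw [← cfc_mul _ _ A (A.finite_real_spectrum.continuousOn _)
    (A.finite_real_spectrum.continuousOn _)]
  refine cfc_congr fun x hx => ?_
  rw [hA.1.spectrum_real_eq_range_eigenvalues] at hx
  obtain ⟨i, rfl⟩ := hx
  exact (Real.rpow_add (hA.eigenvalues_pos i) r s).symm

lemma PosDef.mrpow_mul_mrpow_neg (hA : A.PosDef) (r : ℝ) : mrpow A r * mrpow A (-r) = 1 := by
  rw [hA.mrpow_mul_mrpow, add_neg_cancel, hA.1.mrpow_zero]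

lemma PosDef.isUnit_mrpow (hA : A.PosDef) (r : ℝ) : IsUnit (mrpow A r) := by
  refine ⟨⟨mrpow A r, mrpow A (-r), hA.mrpow_mul_mrpow_neg r, ?_⟩, rfl⟩
  simpa using hA.mrpow_mul_mrpow_neg (-r)

lemma PosDef.mrpow_half_mul_mrpow_half (hA : A.PosDef) :
    mrpow A (1 / 2) * mrpow A (1 / 2) = A := by
  rw [hA.mrpow_mul_mrpow, add_halves, hA.1.mrpow_one]

lemma PosDef.trace_mul_conj_mrpow_neg_half (hA : A.PosDef) (B : Matrix d d ℂ) :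
    (A * (mrpow A (-(1 / 2)) * B * mrpow A (-(1 / 2)))).trace = B.trace := by
  have hST := hA.mrpow_mul_mrpow_neg (-(1 / 2))
  rw [neg_neg] at hST
  nth_rw 1 [← hA.mrpow_half_mul_mrpow_half]
  rw [show mrpow A (1 / 2) * mrpow A (1 / 2) * (mrpow A (-(1 / 2)) * B * mrpow A (-(1 / 2))) =
      mrpow A (1 / 2) * (mrpow A (1 / 2) * mrpow A (-(1 / 2))) * B * mrpow A (-(1 / 2)) by
    simp only [Matrix.mul_assoc], hA.mrpow_mul_mrpow_neg, Matrix.mul_one, trace_mul_cycle, hST,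
    Matrix.one_mul]

lemma PosDef.eq_of_conj_mrpow_neg_half_eq_one (hA : A.PosDef) {B : Matrix d d ℂ}
    (h : mrpow A (-(1 / 2)) * B * mrpow A (-(1 / 2)) = 1) : B = A := by
  have hST := hA.mrpow_mul_mrpow_neg (-(1 / 2))
  rw [neg_neg] at hST
  calc B = mrpow A (1 / 2) * mrpow A (-(1 / 2)) * B * (mrpow A (-(1 / 2)) * mrpow A (1 / 2)) := by
        rw [hA.mrpow_mul_mrpow_neg, hST, Matrix.one_mul, Matrix.mul_one]
    _ = mrpow A (1 / 2) * (mrpow A (-(1 / 2)) * B * mrpow A (-(1 / 2))) * mrpow A (1 / 2) := by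
        simp only [Matrix.mul_assoc]
    _ = A := by rw [h, Matrix.mul_one, hA.mrpow_half_mul_mrpow_half]

lemma IsHermitian.eq_one_of_eigenvalues_eq_one (hA : A.IsHermitian)
    (h : ∀ i, hA.eigenvalues i = 1) : A = 1 := by
  rw [← hA.matFun_id, ← hA.matFun_const_one, hA.matFun_eq_cfc, hA.matFun_eq_cfc]
  refine cfc_congr fun x hx => ?_
  rw [hA.spectrum_real_eq_range_eigenvalues] at hx
  obtain ⟨i, rfl⟩ := hx
  exact h i

/-- `eigenWeight hA B i = ⟨vᵢ, B vᵢ⟩` for the `i`-th eigenvector `vᵢ` of `A`. -/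
noncomputable def IsHermitian.eigenWeight (hA : A.IsHermitian) (B : Matrix d d ℂ) (i : d) : ℝ :=
  ((star (hA.eigenvectorUnitary : Matrix d d ℂ) * B * hA.eigenvectorUnitary) i i).re

lemma IsHermitian.re_trace_mul_matFun (hA : A.IsHermitian) (B : Matrix d d ℂ) (f : ℝ → ℝ) :
    (B * matFun A f).trace.re = ∑ i, hA.eigenWeight B i * f (hA.eigenvalues i) := by
  rw [matFun, dif_pos hA, ← Matrix.mul_assoc, ← Matrix.mul_assoc, trace_mul_comm,
    ← Matrix.mul_assoc, ← Matrix.mul_assoc]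
  simp [Matrix.trace, eigenWeight]

lemma IsHermitian.sum_eigenWeight (hA : A.IsHermitian) (B : Matrix d d ℂ) :
    ∑ i, hA.eigenWeight B i = B.trace.re := by
  simpa [hA.matFun_const_one] using (hA.re_trace_mul_matFun B (fun _ => 1)).symm

lemma IsHermitian.sum_eigenWeight_mul_eigenvalues (hA : A.IsHermitian) (B : Matrix d d ℂ) :
    ∑ i, hA.eigenWeight B i * hA.eigenvalues i = (B * A).trace.re := by
  simpa [hA.matFun_id] using (hA.re_trace_mul_matFun B (fun x => x)).symm

lemma IsHermitian.eigenWeight_pos (hA : A.IsHermitian) {B : Matrix d d ℂ} (hB : B.PosDef)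
    (i : d) : 0 < hA.eigenWeight B i := by
  have hconj : (star (hA.eigenvectorUnitary : Matrix d d ℂ) * B * hA.eigenvectorUnitary).PosDef :=
    (Unitary.isUnit_coe (U := hA.eigenvectorUnitary)).posDef_star_left_conjugate_iff.mpr hB
  exact (Complex.pos_iff.mp hconj.diag_pos).1

end Matrix

/-- **Faithfulness of the geometric Rényi relative entropy.** If `ρ` is a positive definite
density matrix, `σ` is positive definite with `Tr[σ] ≤ 1`, `α ∈ (0,1) ∪ (1,2]`, and
`D̂_α(ρ‖σ) = (α-1)⁻¹ ln Tr[σ (σ^{-1/2} ρ σ^{-1/2})^α] = 0`, then `ρ = σ`. -/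
theorem geomRenyi_faithful {n : ℕ}
    (ρ σ : Matrix (Fin n) (Fin n) ℂ) (hρ : ρ.PosDef) (hρ1 : ρ.trace = 1)
    (hσ : σ.PosDef) (hσ1 : σ.trace.re ≤ 1)
    (α : ℝ) (hα : α ∈ Set.Ioo (0 : ℝ) 1 ∪ Set.Ioc 1 2)
    (hD : (α - 1)⁻¹ * Real.log (geomQuasiEntropy α ρ σ).re = 0) :
    ρ = σ := by
  obtain ⟨hα0, hα1⟩ : 0 < α ∧ α ≠ 1 := by
    rcases hα with h | h
    · exact ⟨h.1, h.2.ne⟩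
    · exact ⟨by linarith [h.1], h.1.ne'⟩
  set S := mrpow σ (-(1 / 2))
  have hX : (S * ρ * S).PosDef := by
    have hS : star S = S := (hσ.1.isHermitian_mrpow _).eq
    have hconj := (hσ.isUnit_mrpow (-(1 / 2))).posDef_star_left_conjugate_iff.mpr hρ
    rwa [hS] at hconj
  set μ := hX.1.eigenvalues
  set w := hX.1.eigenWeight σ
  have hw_sum : ∑ i, w i ≤ 1 := hX.1.sum_eigenWeight σ ▸ hσ1
  have hw_mean : ∑ i, w i * μ i = 1 := by
    rw [hX.1.sum_eigenWeight_mul_eigenvalues, hσ.trace_mul_conj_mrpow_neg_half, hρ1,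
      Complex.one_re]
  have hQ : (geomQuasiEntropy α ρ σ).re = ∑ i, w i * μ i ^ α := hX.1.re_trace_mul_matFun σ _
  have hQ_pos : 0 < (geomQuasiEntropy α ρ σ).re :=
    hQ ▸ Finset.sum_pos (fun i _ => mul_pos (hX.1.eigenWeight_pos hσ i)
      (Real.rpow_pos_of_pos (hX.eigenvalues_pos i) α))
      (Finset.nonempty_of_sum_ne_zero (hw_mean ▸ one_ne_zero))
  have hQ_one : ∑ i, w i * μ i ^ α = 1 := hQ ▸ Real.eq_one_of_pos_of_log_eq_zero hQ_pos
    ((mul_eq_zero.mp hD).resolve_left (inv_ne_zero (sub_ne_zero.mpr hα1)))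
  refine hσ.eq_of_conj_mrpow_neg_half_eq_one (hX.1.eq_one_of_eigenvalues_eq_one fun i => ?_)
  exact eq_one_of_sum_mul_rpow_eq_one hα0 hα1 (hX.1.eigenWeight_pos hσ)
    (fun i => (hX.eigenvalues_pos i).le) hw_sum hw_mean hQ_one i
end

section
/- Schwarz inequality for two-positive unital maps: if Φ is a two-positive, unital linear map on complex matrices, then Φ(X†)Φ(X) ≤ Φ(X†X) and Φ(X)Φ(X†) ≤ Φ(XX†) for every matrix X, where ≤ is the Loewner order. -/
open Matrix
open scoped ComplexOrder

/-!
The block matrix `[[XᴴX, Xᴴ], [X, 1]]` equals `FᴴF` for `F = [[X, 1], [0, 0]]`, so it is positive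
semidefinite. Two-positivity and unitality make `[[Φ(XᴴX), Φ(Xᴴ)], [Φ(X), 1]]` positive semidefinite,
and its Schur complement with respect to the identity block is `Φ(XᴴX) - Φ(Xᴴ)Φ(X)`.
The second inequality is the first one applied to `Xᴴ`.
-/

namespace Matrix

variable {m n R : Type*} [Fintype m] [Fintype n] [DecidableEq m]
  [CommRing R] [PartialOrder R] [StarRing R] [StarOrderedRing R]

theorem posSemidef_fromBlocks_conjTranspose_mul_self_one (X : Matrix m n R) :
    (fromBlocks (Xᴴ * X) Xᴴ X 1).PosSemidef := by
  have h := posSemidef_conjTranspose_mul_self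
    (fromBlocks X (1 : Matrix m m R) (0 : Matrix m n R) 0)
  rw [fromBlocks_conjTranspose, fromBlocks_multiply] at h
  simpa using h

theorem PosSemidef.sub_mul_of_fromBlocks_one [NoZeroDivisors R] {A : Matrix n n R}
    {B : Matrix n m R} {C : Matrix m n R} (h : (fromBlocks A B C 1).PosSemidef) :
    (A - B * C).PosSemidef := by
  obtain rfl : Bᴴ = C := (isHermitian_fromBlocks_iff.mp h.isHermitian).2.1
  let : Invertible (1 : Matrix m m R) := invertibleOne
  simpa using (PosDef.fromBlocks₂₂ A B PosDef.one).mp h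

theorem posSemidef_map_conjTranspose_mul_self_sub_mul [NoZeroDivisors R] [DecidableEq n]
    {Φ : Matrix n n R →ₗ[R] Matrix m m R} (hunital : Φ 1 = 1)
    (h2pos : ∀ A B C D : Matrix n n R, (fromBlocks A B C D).PosSemidef →
      (fromBlocks (Φ A) (Φ B) (Φ C) (Φ D)).PosSemidef)
    (X : Matrix n n R) : (Φ (Xᴴ * X) - Φ Xᴴ * Φ X).PosSemidef := by
  have h := h2pos _ _ _ _ (posSemidef_fromBlocks_conjTranspose_mul_self_one X)
  rw [hunital] at h
  exact h.sub_mul_of_fromBlocks_one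

end Matrix

/-- **Schwarz inequality for two-positive unital maps.** If `Φ` is a linear, unital,
two-positive map on complex matrices, then `Φ(Xᴴ)Φ(X) ≤ Φ(XᴴX)` and
`Φ(X)Φ(Xᴴ) ≤ Φ(XXᴴ)` in the Loewner order, for every matrix `X`. -/
theorem schwarz_two_positive_unital {n m : ℕ}
    (Φ : Matrix (Fin n) (Fin n) ℂ →ₗ[ℂ] Matrix (Fin m) (Fin m) ℂ)
    (hunital : Φ 1 = 1)
    (h2pos : ∀ A B C D : Matrix (Fin n) (Fin n) ℂ,
      (Matrix.fromBlocks A B C D).PosSemidef →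
        (Matrix.fromBlocks (Φ A) (Φ B) (Φ C) (Φ D)).PosSemidef) :
    ∀ X : Matrix (Fin n) (Fin n) ℂ,
      (Φ (Xᴴ * X) - Φ Xᴴ * Φ X).PosSemidef ∧
      (Φ (X * Xᴴ) - Φ X * Φ Xᴴ).PosSemidef := by
  intro X
  have hschwarz := posSemidef_map_conjTranspose_mul_self_sub_mul hunital h2pos
  refine ⟨hschwarz X, ?_⟩
  simpa using hschwarz Xᴴ
end

section
/- Sup-trace characterization of the operator norm: for a positive semidefinite matrix K, sup over matrices Z with Tr[Z†Z] = 1 of Tr[Z†Z K] equals ‖K‖∞. More generally, for positive semidefinite K_RB on a bipartite space and Choi-type quantities X = ∂Γ, Y = Γ with Γ positive definite, sup over invertible Z_R with Tr[Z_R†Z_R] = 1 of Tr[(Z_R X Z_R†)(Z_R Y Z_R†)⁻¹(Z_R X Z_R†)] = ‖Tr_B[X Y⁻¹ X]‖∞, where X is Hermitian and the transformer equality (Z X Z†)(Z Y Z†)⁻¹(Z X Z†) = Z X Y⁻¹ X Z† for invertible Z is used. -/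
open Matrix
open scoped ComplexOrder Kronecker

/-- The operator (spectral) norm of a complex matrix, via its action on Euclidean space. -/
noncomputable def opNorm {d : Type*} [Fintype d] [DecidableEq d]
    (A : Matrix d d ℂ) : ℝ :=
  ‖Matrix.toEuclideanCLM (𝕜 := ℂ) A‖

/-- Partial trace over the second tensor factor. -/
noncomputable def ptraceB {a b : ℕ}
    (M : Matrix (Fin a × Fin b) (Fin a × Fin b) ℂ) : Matrix (Fin a) (Fin a) ℂ :=
  Matrix.of fun i j => ∑ k : Fin b, M (i, k) (j, k)

/-!
For Hermitian `K` one has `K ≤ ‖K‖ • 1` in the Loewner order; conjugating by `Z` and taking traces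
gives `Re Tr[ZᴴZ K] ≤ ‖K‖ Re Tr[ZᴴZ]`. For `K ≥ 0` the norm `‖K‖` is an eigenvalue, and the
rank-one projection onto a unit eigenvector attains the bound. To reach it with invertible `Z`,
mix that projection with the maximally mixed state: `(1 - t) Z₀ᴴZ₀ + (t / n) 1` is positive
definite, hence equal to `ZᴴZ` for an invertible `Z`, and its value tends to `‖K‖` as `t → 0⁺`.

For invertible `Z = Z_R ⊗ 1` the transformer identity `(ZXZᴴ)(ZΓZᴴ)⁻¹(ZXZᴴ) = Z(XΓ⁻¹X)Zᴴ` and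
cyclicity of the trace turn the channel quantity into `Tr[Z_RᴴZ_R Tr_B[XΓ⁻¹X]]`, and `Tr_B` maps
the positive semidefinite `XΓ⁻¹X` to a positive semidefinite matrix, so the first part applies.
-/

section
variable {m : Type*} [Fintype m] [DecidableEq m]
open scoped Matrix.Norms.L2Operator MatrixOrder Topology
open Filter

theorem re_trace_conjTranspose_mul_self_mul_le {K : Matrix m m ℂ} (hK : K.IsHermitian)
    (Z : Matrix m m ℂ) :
    ((Zᴴ * Z * K).trace).re ≤ opNorm K * ((Zᴴ * Z).trace).re := by
  have hle : K ≤ algebraMap ℝ (Matrix m m ℂ) (opNorm K) :=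
    IsSelfAdjoint.le_algebraMap_norm_self hK.isSelfAdjoint
  have hconj := (Matrix.le_iff.mp hle).mul_mul_conjTranspose_same Z
  have hnonneg := Complex.nonneg_iff.mp hconj.trace_nonneg
  rw [Matrix.mul_sub, Matrix.sub_mul, Matrix.trace_sub, Matrix.trace_mul_cycle,
    Matrix.trace_mul_cycle Z K, Algebra.algebraMap_eq_smul_one, Matrix.mul_smul, Matrix.mul_one,
    Matrix.trace_smul] at hnonneg
  simpa [Complex.sub_re] using hnonneg.1

theorem exists_trace_eq_one_trace_mul_eq_opNorm [Nonempty m] {K : Matrix m m ℂ}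
    (hK : K.PosSemidef) :
    ∃ Z : Matrix m m ℂ, (Zᴴ * Z).trace = 1 ∧ (Zᴴ * Z * K).trace = opNorm K := by
  have hmem : opNorm K ∈ spectrum ℝ K :=
    CStarAlgebra.norm_mem_spectrum_of_nonneg (Matrix.nonneg_iff_posSemidef.mpr hK)
  rw [hK.isHermitian.spectrum_real_eq_range_eigenvalues] at hmem
  obtain ⟨i, hi⟩ := hmem
  set u : m → ℂ := ⇑(hK.isHermitian.eigenvectorBasis i)
  have hu : star u ⬝ᵥ u = 1 := by
    have h := hK.isHermitian.eigenvectorBasis.inner_eq_one i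
    rw [EuclideanSpace.inner_eq_star_dotProduct] at h
    simpa [dotProduct_comm] using h
  have hKu : K *ᵥ u = (opNorm K : ℂ) • u := by
    rw [← hi]; exact hK.isHermitian.mulVec_eigenvectorBasis i
  have hP : (vecMulVec u (star u))ᴴ * vecMulVec u (star u) = vecMulVec u (star u) := by
    rw [conjTranspose_vecMulVec, star_star, vecMulVec_mul_vecMulVec, hu, one_smul]
  refine ⟨vecMulVec u (star u), by rw [hP, trace_vecMulVec, dotProduct_comm, hu], ?_⟩
  rw [hP, trace_mul_comm, mul_vecMulVec, trace_vecMulVec, hKu, smul_dotProduct, dotProduct_comm,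
    hu]
  simp

theorem isGreatest_re_trace_conjTranspose_mul_self_mul [Nonempty m] {K : Matrix m m ℂ}
    (hK : K.PosSemidef) :
    IsGreatest {r : ℝ | ∃ Z : Matrix m m ℂ, (Zᴴ * Z).trace = 1 ∧ r = ((Zᴴ * Z * K).trace).re}
      (opNorm K) := by
  obtain ⟨Z, hZ, hZK⟩ := exists_trace_eq_one_trace_mul_eq_opNorm hK
  refine ⟨⟨Z, hZ, by simp [hZK]⟩, ?_⟩
  rintro r ⟨W, hW, rfl⟩
  simpa [hW] using re_trace_conjTranspose_mul_self_mul_le hK.isHermitian W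

theorem isLUB_re_trace_conjTranspose_mul_self_mul_of_isUnit [Nonempty m] {K : Matrix m m ℂ}
    (hK : K.PosSemidef) :
    IsLUB {r : ℝ | ∃ Z : Matrix m m ℂ, IsUnit Z ∧ (Zᴴ * Z).trace = 1 ∧
        r = ((Zᴴ * Z * K).trace).re}
      (opNorm K) := by
  obtain ⟨Z₀, hZ₀, hZ₀K⟩ := exists_trace_eq_one_trace_mul_eq_opNorm hK
  set ρ : ℝ → Matrix m m ℂ := fun t => (1 - t) • (Z₀ᴴ * Z₀) + (t / Fintype.card m) • 1
  have hρ_posDef : ∀ t ∈ Set.Ioo (0 : ℝ) 1, (ρ t).PosDef := fun t ht =>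
    PosDef.posSemidef_add ((posSemidef_conjTranspose_mul_self Z₀).smul (sub_nonneg.mpr ht.2.le))
      (PosDef.one.smul (div_pos ht.1 (Nat.cast_pos.mpr Fintype.card_pos)))
  have hρ_trace : ∀ t, (ρ t).trace = 1 := fun t => by simp [ρ, hZ₀, trace_smul]
  have hρ_lim : Tendsto (fun t => ((ρ t * K).trace).re) (𝓝[>] 0) (𝓝 (opNorm K)) := by
    have hcont : Continuous fun t => ((ρ t * K).trace).re := by fun_prop
    simpa [ρ, hZ₀K] using (hcont.tendsto 0).mono_left nhdsWithin_le_nhds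
  refine isLUB_of_mem_closure ?_ (mem_closure_of_tendsto hρ_lim ?_)
  · rintro r ⟨Z, -, hZ, rfl⟩
    simpa [hZ] using re_trace_conjTranspose_mul_self_mul_le hK.isHermitian Z
  · filter_upwards [Ioo_mem_nhdsGT one_pos] with t ht
    obtain ⟨Z, hZ, hZρ⟩ :=
      CStarAlgebra.isStrictlyPositive_iff_eq_star_mul_self.mp (hρ_posDef t ht).isStrictlyPositive
    rw [star_eq_conjTranspose] at hZρ
    exact ⟨Z, hZ, hZρ ▸ hρ_trace t, by rw [hZρ]⟩
end

theorem Matrix.mul_mul_conjTranspose_mul_inv_mul {n R : Type*} [Fintype n] [DecidableEq n]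
    [CommRing R] [StarRing R] {Z : Matrix n n R} (hZ : IsUnit Z) (X Γ : Matrix n n R) :
    Z * X * Zᴴ * (Z * Γ * Zᴴ)⁻¹ * (Z * X * Zᴴ) = Z * (X * Γ⁻¹ * X) * Zᴴ := by
  have hZ_det : IsUnit Z.det := (isUnit_iff_isUnit_det Z).mp hZ
  have hZh_det : IsUnit Zᴴ.det := (isUnit_iff_isUnit_det Zᴴ).mp ((isUnit_conjTranspose Z).mpr hZ)
  simp only [mul_inv_rev, Matrix.mul_assoc, mul_nonsing_inv_cancel_left _ _ hZh_det,
    nonsing_inv_mul_cancel_left _ _ hZ_det]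

section
variable {a b : ℕ}

theorem trace_kronecker_one_mul (W : Matrix (Fin a) (Fin a) ℂ)
    (M : Matrix (Fin a × Fin b) (Fin a × Fin b) ℂ) :
    ((W ⊗ₖ (1 : Matrix (Fin b) (Fin b) ℂ)) * M).trace = (W * ptraceB M).trace := by
  simp only [trace, diag_apply, mul_apply, ptraceB, of_apply, Fintype.sum_prod_type,
    kroneckerMap_apply, one_apply, mul_ite, mul_one, mul_zero, ite_mul, zero_mul,
    Finset.sum_ite_eq, Finset.mem_univ, if_true, Finset.mul_sum]
  exact Finset.sum_congr rfl fun i _ => Finset.sum_comm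

theorem ptraceB_eq_sum_submatrix (M : Matrix (Fin a × Fin b) (Fin a × Fin b) ℂ) :
    ptraceB M = ∑ k, M.submatrix (·, k) (·, k) := by
  ext i j
  simp [ptraceB, Matrix.sum_apply]

theorem Matrix.PosSemidef.ptraceB {M : Matrix (Fin a × Fin b) (Fin a × Fin b) ℂ}
    (hM : M.PosSemidef) : (ptraceB M).PosSemidef := by
  rw [ptraceB_eq_sum_submatrix]
  exact posSemidef_sum _ fun k _ => hM.submatrix _

theorem trace_kronecker_one_transformer {ZR : Matrix (Fin a) (Fin a) ℂ} (hZR : IsUnit ZR)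
    (Γ X : Matrix (Fin a × Fin b) (Fin a × Fin b) ℂ) :
    ((ZR ⊗ₖ (1 : Matrix (Fin b) (Fin b) ℂ)) * X * (ZR ⊗ₖ (1 : Matrix (Fin b) (Fin b) ℂ))ᴴ *
        ((ZR ⊗ₖ (1 : Matrix (Fin b) (Fin b) ℂ)) * Γ * (ZR ⊗ₖ (1 : Matrix (Fin b) (Fin b) ℂ))ᴴ)⁻¹ *
        ((ZR ⊗ₖ (1 : Matrix (Fin b) (Fin b) ℂ)) * X *
          (ZR ⊗ₖ (1 : Matrix (Fin b) (Fin b) ℂ))ᴴ)).trace =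
      (ZRᴴ * ZR * ptraceB (X * Γ⁻¹ * X)).trace := by
  rw [mul_mul_conjTranspose_mul_inv_mul (hZR.kronecker isUnit_one), trace_mul_cycle,
    conjTranspose_kronecker, conjTranspose_one, ← mul_kronecker_mul, Matrix.one_mul,
    trace_kronecker_one_mul]
end

theorem opNorm_sup_trace_and_rld_channel_general {n a b : ℕ} (hn : 0 < n) (ha : 0 < a)
    (K : Matrix (Fin n) (Fin n) ℂ) (hK : K.PosSemidef)
    (Γ X : Matrix (Fin a × Fin b) (Fin a × Fin b) ℂ)
    (hΓ : Γ.PosDef) (hX : X.IsHermitian) :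
    IsGreatest {r : ℝ | ∃ Z : Matrix (Fin n) (Fin n) ℂ,
        (Zᴴ * Z).trace = 1 ∧ r = ((Zᴴ * Z * K).trace).re}
      (opNorm K) ∧
    IsLUB {r : ℝ | ∃ ZR : Matrix (Fin a) (Fin a) ℂ, IsUnit ZR ∧ (ZRᴴ * ZR).trace = 1 ∧
        r = ((((ZR ⊗ₖ (1 : Matrix (Fin b) (Fin b) ℂ)) * X *
                (ZR ⊗ₖ (1 : Matrix (Fin b) (Fin b) ℂ))ᴴ) *
              ((ZR ⊗ₖ (1 : Matrix (Fin b) (Fin b) ℂ)) * Γ *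
                (ZR ⊗ₖ (1 : Matrix (Fin b) (Fin b) ℂ))ᴴ)⁻¹ *
              ((ZR ⊗ₖ (1 : Matrix (Fin b) (Fin b) ℂ)) * X *
                (ZR ⊗ₖ (1 : Matrix (Fin b) (Fin b) ℂ))ᴴ)).trace).re}
      (opNorm (ptraceB (X * Γ⁻¹ * X))) := by
  have : Nonempty (Fin n) := ⟨⟨0, hn⟩⟩
  have : Nonempty (Fin a) := ⟨⟨0, ha⟩⟩
  refine ⟨isGreatest_re_trace_conjTranspose_mul_self_mul hK, ?_⟩
  have hXΓX : (X * Γ⁻¹ * X).PosSemidef := by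
    simpa only [hX.eq] using hΓ.inv.posSemidef.conjTranspose_mul_mul_same X
  convert isLUB_re_trace_conjTranspose_mul_self_mul_of_isUnit hXΓX.ptraceB using 1
  ext r
  refine exists_congr fun ZR => and_congr_right fun hZR => ?_
  rw [trace_kronecker_one_transformer hZR]

/-- **Sup–trace characterization of the operator norm, and the RLD Fisher information
formula for channels.** (i) For positive semidefinite `K`, the supremum of
`Tr[ZᴴZ K]` over `Z` with `Tr[ZᴴZ] = 1` equals `‖K‖∞` and is attained. (ii) For positive
definite `Γ` on a bipartite space and Hermitian `X`, the supremum over invertible `Z_R`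
with `Tr[Z_RᴴZ_R] = 1` of `Tr[(Z X Zᴴ)(Z Γ Zᴴ)⁻¹(Z X Zᴴ)]`, where `Z = Z_R ⊗ I_B`,
equals `‖Tr_B[X Γ⁻¹ X]‖∞`. -/
theorem opNorm_sup_trace_and_rld_channel {n a b : ℕ} (hn : 0 < n) (ha : 0 < a) (hb : 0 < b)
    (K : Matrix (Fin n) (Fin n) ℂ) (hK : K.PosSemidef)
    (Γ X : Matrix (Fin a × Fin b) (Fin a × Fin b) ℂ)
    (hΓ : Γ.PosDef) (hX : X.IsHermitian) :
    IsGreatest {r : ℝ | ∃ Z : Matrix (Fin n) (Fin n) ℂ,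
        (Zᴴ * Z).trace = 1 ∧ r = ((Zᴴ * Z * K).trace).re}
      (opNorm K) ∧
    IsLUB {r : ℝ | ∃ ZR : Matrix (Fin a) (Fin a) ℂ, IsUnit ZR ∧ (ZRᴴ * ZR).trace = 1 ∧
        r = ((((ZR ⊗ₖ (1 : Matrix (Fin b) (Fin b) ℂ)) * X *
                (ZR ⊗ₖ (1 : Matrix (Fin b) (Fin b) ℂ))ᴴ) *
              ((ZR ⊗ₖ (1 : Matrix (Fin b) (Fin b) ℂ)) * Γ *
                (ZR ⊗ₖ (1 : Matrix (Fin b) (Fin b) ℂ))ᴴ)⁻¹ *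
              ((ZR ⊗ₖ (1 : Matrix (Fin b) (Fin b) ℂ)) * X *
                (ZR ⊗ₖ (1 : Matrix (Fin b) (Fin b) ℂ))ᴴ)).trace).re}
      (opNorm (ptraceB (X * Γ⁻¹ * X))) :=
  opNorm_sup_trace_and_rld_channel_general hn ha K hK Γ X hΓ hX
end
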